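/- arXiv:2201.06165 — 4 statements merged into one kernel-verified Lean document; each statement's English description precedes it below -/
import Mathlib

section
/- Let A and B be finitely generated abelian groups and let R_A ≤ A and R_B ≤ B be retracts. Then the subgroup R_A ≀ R_B of A ≀ B, identified with the set of elements fb with b ∈ R_B and f a finitely supported function with supp(f) ⊆ R_B and range contained in R_A, is a retract of A ≀ B; in particular, R_A ≀ R_B is conjugacy embedded in A ≀ B. -/
open Pointwise

namespace WreathDepth

def base (A B : Type*) [Group A] [Group B] : Subgroup (B → A) where
  carrier := {f | (Function.mulSupport f).Finite}
  one_mem' := by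
    simp [Function.mulSupport_one]
  mul_mem' := by
    intro f g hf hg
    exact (Set.Finite.union hf hg).subset (Function.mulSupport_mul f g)
  inv_mem' := by
    intro f hf
    simpa [Function.mulSupport_inv] using hf

lemma mem_base_iff {A B : Type*} [Group A] [Group B] (f : B → A) :
    f ∈ base A B ↔ (Function.mulSupport f).Finite := Iff.rfl

def shiftEquiv {A B : Type*} [Group A] [Group B] (b : B) : base A B ≃* base A B where
  toFun f := ⟨fun x => (f : B → A) (b⁻¹ * x), by
    have h : (Function.mulSupport fun x => (f : B → A) (b⁻¹ * x)) =
        (fun x => b⁻¹ * x) ⁻¹' Function.mulSupport (f : B → A) := rfl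
    rw [mem_base_iff, h]
    exact Set.Finite.preimage ((mul_right_injective b⁻¹).injOn) f.2⟩
  invFun f := ⟨fun x => (f : B → A) (b * x), by
    have h : (Function.mulSupport fun x => (f : B → A) (b * x)) =
        (fun x => b * x) ⁻¹' Function.mulSupport (f : B → A) := rfl
    rw [mem_base_iff, h]
    exact Set.Finite.preimage ((mul_right_injective b).injOn) f.2⟩
  left_inv f := by
    ext x
    simp
  right_inv f := by
    ext x
    simp
  map_mul' f g := rfl

def shiftHom (A B : Type*) [Group A] [Group B] : B →* MulAut (base A B) where
  toFun := shiftEquiv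
  map_one' := by
    apply MulEquiv.ext
    intro f
    apply Subtype.ext
    funext x
    show (f : B → A) ((1 : B)⁻¹ * x) = (f : B → A) x
    simp
  map_mul' b₁ b₂ := by
    apply MulEquiv.ext
    intro f
    apply Subtype.ext
    funext x
    show (f : B → A) ((b₁ * b₂)⁻¹ * x) = (f : B → A) (b₂⁻¹ * (b₁⁻¹ * x))
    rw [mul_inv_rev, mul_assoc]

/-- The restricted wreath product `A ≀ B`. -/
abbrev Wr (A B : Type*) [Group A] [Group B] : Type _ := base A B ⋊[shiftHom A B] B

lemma wr_mul_left_apply {A B : Type*} [Group A] [Group B] (x y : Wr A B) (z : B) :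
    ((x * y).left : B → A) z = (x.left : B → A) z * (y.left : B → A) (x.right⁻¹ * z) := rfl

lemma wr_inv_left_apply {A B : Type*} [Group A] [Group B] (x : Wr A B) (z : B) :
    ((x⁻¹).left : B → A) z = ((x.left : B → A) (x.right⁻¹⁻¹ * z))⁻¹ := rfl

/-- For subgroups `RA ≤ A` and `RB ≤ B`, the subgroup `RA ≀ RB` of `A ≀ B`,
consisting of elements whose acting part lies in `RB` and whose base part is
supported in `RB` with values in `RA`. -/
def wrSubgroup {A B : Type*} [Group A] [Group B] (RA : Subgroup A) (RB : Subgroup B) :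
    Subgroup (Wr A B) where
  carrier := {x | x.right ∈ RB ∧ (∀ y : B, (x.left : B → A) y ∈ RA) ∧
      ∀ y : B, y ∉ RB → (x.left : B → A) y = 1}
  one_mem' := by
    refine ⟨by simpa using one_mem RB, fun y => ?_, fun y _ => ?_⟩
    · simpa using one_mem RA
    · simp
  mul_mem' := by
    rintro x y ⟨hxr, hxA, hxs⟩ ⟨hyr, hyA, hys⟩
    refine ⟨by simpa using mul_mem hxr hyr, ?_, ?_⟩
    · intro z
      rw [wr_mul_left_apply]
      exact mul_mem (hxA z) (hyA _)
    · intro z hz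
      rw [wr_mul_left_apply, hxs z hz, one_mul]
      apply hys
      intro hmem
      exact hz (by simpa using mul_mem hxr hmem)
  inv_mem' := by
    rintro x ⟨hxr, hxA, hxs⟩
    refine ⟨by simpa using inv_mem hxr, ?_, ?_⟩
    · intro z
      rw [wr_inv_left_apply]
      exact inv_mem (hxA _)
    · intro z hz
      rw [wr_inv_left_apply, hxs, inv_one]
      intro hmem
      apply hz
      have : x.right⁻¹ * (x.right⁻¹⁻¹ * z) ∈ RB := mul_mem (inv_mem hxr) hmem
      simpa using this

/-- The ball of radius `n` in `G` with respect to the generating set `S`: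
products of at most `n` elements of `S ∪ S⁻¹`. -/
def ball (G : Type*) [Group G] (S : Set G) (n : ℕ) : Set G :=
  {g | ∃ w : List G, (∀ x ∈ w, x ∈ S ∪ S⁻¹) ∧ w.length ≤ n ∧ w.prod = g}

/-- `S` is a finite generating set of `G`. -/
def GeneratingSet {G : Type*} [Group G] (S : Set G) : Prop :=
  S.Finite ∧ Subgroup.closure S = ⊤

/-- The conjugacy depth of a pair of elements: the minimal order of a finite
quotient of `G` in which the images of `x` and `y` are not conjugate
(`⊤` if there is no such quotient). -/
noncomputable def CD (G : Type*) [Group G] (x y : G) : ℕ∞ :=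
  sInf {c : ℕ∞ | ∃ (Q : Type) (_ : Group Q) (_ : Finite Q) (π : G →* Q),
    Function.Surjective π ∧ ¬ IsConj (π x) (π y) ∧ c = (Nat.card Q : ℕ∞)}

/-- The conjugacy depth function of `G` with respect to a generating set `S`. -/
noncomputable def conjDepthFn (G : Type*) [Group G] (S : Set G) (n : ℕ) : ℕ∞ :=
  ⨆ (x : G) (_ : x ∈ ball G S n) (y : G) (_ : y ∈ ball G S n) (_ : ¬ IsConj x y),
    CD G x y

/-- `u ≼ v` : there is `C ∈ ℕ` with `u n ≤ C * v (C * n)` for all `n`. -/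
def Preceq (u v : ℕ → ℕ∞) : Prop :=
  ∃ C : ℕ, ∀ n : ℕ, u n ≤ (C : ℕ∞) * v (C * n)

/-- `u ≈ v` : `u ≼ v` and `v ≼ u`. -/
def AsympEquiv (u v : ℕ → ℕ∞) : Prop := Preceq u v ∧ Preceq v u

/-- `G` is conjugacy separable. -/
def ConjugacySeparable (G : Type*) [Group G] : Prop :=
  ∀ x y : G, ¬ IsConj x y →
    ∃ (Q : Type) (_ : Group Q) (_ : Finite Q) (π : G →* Q),
      Function.Surjective π ∧ ¬ IsConj (π x) (π y)

/-- Every cyclic subgroup of `G` is separable. -/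
def CyclicSubgroupSeparable (G : Type*) [Group G] : Prop :=
  ∀ x g : G, g ∉ Subgroup.zpowers x →
    ∃ (Q : Type) (_ : Group Q) (_ : Finite Q) (π : G →* Q),
      Function.Surjective π ∧ π g ∉ Subgroup.map π (Subgroup.zpowers x)

/-- `H` is a retract of `G`: there is an endomorphism of `G` with image in `H`
restricting to the identity on `H` (equivalently, a surjection `G → H` that is
the identity on `H`). -/
def IsRetractSubgroup {G : Type*} [Group G] (H : Subgroup G) : Prop :=
  ∃ ρ : G →* G, (∀ x : G, ρ x ∈ H) ∧ ∀ h ∈ H, ρ h = h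

/-- The finitely generated abelian group `B` has torsion-free rank `k`, i.e.
`B ≅ ℤ^k ⊕ T` with `T` finite. -/
def HasTorsionFreeRank (B : Type*) [CommGroup B] (k : ℕ) : Prop :=
  ∃ (T : Type) (_ : CommGroup T) (_ : Finite T),
    Nonempty (B ≃* Multiplicative (Fin k → ℤ) × T)

/-- An element `f b` of `A ≀ B` is reduced if the elements of the support of `f`
lie in pairwise distinct cosets of `⟨b⟩`. -/
def Reduced {A B : Type*} [Group A] [Group B] (f : base A B) (b : B) : Prop :=
  ∀ x ∈ Function.mulSupport (f : B → A), ∀ y ∈ Function.mulSupport (f : B → A),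
    x⁻¹ * y ∈ Subgroup.zpowers b → x = y


section RetractAux

open Function

variable {A B : Type*} [CommGroup A] [CommGroup B]

open scoped Classical in
/-- The pushed-forward base component under retractions `ρA`, `ρB`. -/
noncomputable def Tfun (ρA : A →* A) (ρB : B →* B) (f : B → A) (x : B) : A :=
  ∏ᶠ y, if ρB y = x then ρA (f y) else 1

open scoped Classical in
lemma Tfun_def (ρA : A →* A) (ρB : B →* B) (f : B → A) (x : B) :
    Tfun ρA ρB f x = ∏ᶠ y, if ρB y = x then ρA (f y) else 1 := rfl

open scoped Classical in
lemma Tfun_factor_support (ρA : A →* A) (ρB : B →* B) (f : B → A) (x : B) :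
    mulSupport (fun y => if ρB y = x then ρA (f y) else 1) ⊆ mulSupport f := by
  intro y hy
  rw [mem_mulSupport] at hy ⊢
  intro hfy
  apply hy
  split <;> simp [hfy]

lemma mulSupport_Tfun_subset (ρA : A →* A) (ρB : B →* B) (f : B → A) :
    mulSupport (Tfun ρA ρB f) ⊆ ρB '' mulSupport f := by
  classical
  intro x hx
  rw [mem_mulSupport, Tfun_def] at hx
  by_contra h
  apply hx
  apply finprod_eq_one_of_forall_eq_one
  intro y
  by_cases hc : ρB y = x
  · rw [if_pos hc]
    by_cases hfy : f y = 1
    · simp [hfy]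
    · exact absurd ⟨y, hfy, hc⟩ h
  · rw [if_neg hc]

lemma Tfun_one (ρA : A →* A) (ρB : B →* B) : Tfun ρA ρB (1 : B → A) = 1 := by
  classical
  funext x
  rw [Tfun_def]
  apply finprod_eq_one_of_forall_eq_one
  intro y
  split <;> simp

lemma Tfun_mul (ρA : A →* A) (ρB : B →* B) {f g : B → A}
    (hf : (mulSupport f).Finite) (hg : (mulSupport g).Finite) :
    Tfun ρA ρB (f * g) = Tfun ρA ρB f * Tfun ρA ρB g := by
  classical
  funext x
  rw [Pi.mul_apply, Tfun_def, Tfun_def, Tfun_def,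
    ← finprod_mul_distrib (hf.subset (Tfun_factor_support ρA ρB f x))
      (hg.subset (Tfun_factor_support ρA ρB g x))]
  apply finprod_congr
  intro y
  by_cases hc : ρB y = x <;> simp [hc, Pi.mul_apply]

lemma Tfun_shift (ρA : A →* A) (ρB : B →* B) (b : B) (f : B → A) :
    Tfun ρA ρB (fun y => f (b⁻¹ * y)) = fun x => Tfun ρA ρB f ((ρB b)⁻¹ * x) := by
  classical
  funext x
  rw [Tfun_def, Tfun_def, ← finprod_comp (fun z => b * z) (Group.mulLeft_bijective b)]
  apply finprod_congr
  intro z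
  have hcond : (ρB (b * z) = x) ↔ (ρB z = (ρB b)⁻¹ * x) := by
    rw [map_mul, eq_inv_mul_iff_mul_eq]
  simp only [inv_mul_cancel_left]
  by_cases hc : ρB z = (ρB b)⁻¹ * x
  · rw [if_pos (hcond.mpr hc), if_pos hc]
  · rw [if_neg (fun h => hc (hcond.mp h)), if_neg hc]

lemma Tfun_mem (ρA : A →* A) (ρB : B →* B) {RA : Subgroup A}
    (hρA : ∀ a, ρA a ∈ RA) {f : B → A} (hf : (mulSupport f).Finite) (x : B) :
    Tfun ρA ρB f x ∈ RA := by
  classical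
  rw [Tfun_def, finprod_eq_prod_of_mulSupport_subset _
    (s := hf.toFinset) (by
      refine (Tfun_factor_support ρA ρB f x).trans ?_
      intro y hy; simpa using hy)]
  apply Subgroup.prod_mem
  intro y _
  split
  · exact hρA _
  · exact one_mem RA

lemma Tfun_off (ρA : A →* A) (ρB : B →* B) {RB : Subgroup B}
    (hρB : ∀ b, ρB b ∈ RB) (f : B → A) (x : B) (hx : x ∉ RB) :
    Tfun ρA ρB f x = 1 := by
  classical
  rw [Tfun_def]
  apply finprod_eq_one_of_forall_eq_one
  intro y
  rw [if_neg]
  intro hc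
  exact hx (hc ▸ hρB y)

lemma Tfun_id (ρA : A →* A) (ρB : B →* B) {RA : Subgroup A} {RB : Subgroup B}
    (hρAid : ∀ a ∈ RA, ρA a = a) (hρBid : ∀ b ∈ RB, ρB b = b)
    {f : B → A} (hval : ∀ y, f y ∈ RA) (hsupp : ∀ y ∉ RB, f y = 1) (x : B) :
    Tfun ρA ρB f x = f x := by
  classical
  rw [Tfun_def, finprod_eq_single _ x ?_]
  · by_cases hx : x ∈ RB
    · rw [if_pos (hρBid x hx), hρAid _ (hval x)]
    · rw [hsupp x hx]
      simp
  · intro y hy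
    by_cases hc : ρB y = x
    · rw [if_pos hc]
      by_cases hfy : f y = 1
      · simp [hfy]
      · have hyB : y ∈ RB := by
          by_contra h
          exact hfy (hsupp y h)
        exact absurd ((hρBid y hyB).symm.trans hc) hy
    · rw [if_neg hc]

/-- `Tfun` bundled as an endomorphism of the base group. -/
noncomputable def Tbar (ρA : A →* A) (ρB : B →* B) : base A B →* base A B where
  toFun f := ⟨Tfun ρA ρB (f : B → A),
    ((((mem_base_iff (f : B → A)).mp f.2).image ρB).subset
      (mulSupport_Tfun_subset ρA ρB (f : B → A)))⟩
  map_one' := Subtype.ext (Tfun_one ρA ρB)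
  map_mul' f g := Subtype.ext
    (Tfun_mul ρA ρB ((mem_base_iff _).mp f.2) ((mem_base_iff _).mp g.2))

lemma isConj_iff_of_retract {G : Type*} [Group G] {H : Subgroup G}
    (h : IsRetractSubgroup H) (x y : H) :
    IsConj x y ↔ IsConj (x : G) (y : G) := by
  rw [isConj_iff, isConj_iff]
  constructor
  · rintro ⟨c, hc⟩
    exact ⟨(c : G), congrArg Subtype.val hc⟩
  · rintro ⟨c, hc⟩
    obtain ⟨ρ, hmem, hid⟩ := h
    refine ⟨⟨ρ c, hmem c⟩, Subtype.ext ?_⟩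
    show ρ c * (x : G) * (ρ c)⁻¹ = (y : G)
    have := congrArg ρ hc
    simpa [map_mul, map_inv, hid _ x.2, hid _ y.2] using this

end RetractAux

/-- If `R_A` and `R_B` are retracts of the finitely generated
abelian groups `A` and `B`, then `R_A ≀ R_B` is a retract of `A ≀ B`; in
particular it is conjugacy embedded in `A ≀ B`. -/
theorem wreath_of_retracts_isRetract (A B : Type*) [CommGroup A] [CommGroup B]
    (hAfg : Group.FG A) (hBfg : Group.FG B) (RA : Subgroup A) (RB : Subgroup B)
    (hRA : IsRetractSubgroup RA) (hRB : IsRetractSubgroup RB) :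
    IsRetractSubgroup (wrSubgroup RA RB) ∧
    ∀ x y : wrSubgroup RA RB, IsConj x y ↔ IsConj (x : Wr A B) (y : Wr A B) := by
  obtain ⟨ρA, hρAmem, hρAid⟩ := hRA
  obtain ⟨ρB, hρBmem, hρBid⟩ := hRB
  have hcomm : ∀ g : B, (Tbar ρA ρB).comp ((shiftHom A B) g).toMonoidHom =
      ((shiftHom A B) (ρB g)).toMonoidHom.comp (Tbar ρA ρB) := by
    intro g
    apply MonoidHom.ext
    intro f
    exact Subtype.ext (Tfun_shift ρA ρB g (f : B → A))
  set ρ : Wr A B →* Wr A B := SemidirectProduct.map (Tbar ρA ρB) ρB hcomm with hρ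
  have hmem : ∀ x : Wr A B, ρ x ∈ wrSubgroup RA RB := by
    intro x
    refine ⟨hρBmem _, fun y => ?_, fun y hy => ?_⟩
    · exact Tfun_mem ρA ρB hρAmem ((mem_base_iff _).mp x.left.2) y
    · exact Tfun_off ρA ρB hρBmem _ y hy
  have hid : ∀ h ∈ wrSubgroup RA RB, ρ h = h := by
    rintro h ⟨h1, h2, h3⟩
    refine SemidirectProduct.ext ?_ (hρBid _ h1)
    exact Subtype.ext (funext fun x => Tfun_id ρA ρB hρAid hρBid h2 h3 x)
  have hretract : IsRetractSubgroup (wrSubgroup RA RB) := ⟨ρ, hmem, hid⟩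
  exact ⟨hretract, fun x y => isConj_iff_of_retract hretract x y⟩


end WreathDepth
end

section
/- Let A be a finite abelian group, let p be a prime dividing |A|, and let B be an infinite finitely generated abelian group. Then A ≀ B contains a subgroup isomorphic to (ℤ/pℤ) ≀ ℤ of the form C ≀ Z₀, where C ≤ A is a subgroup of order p contained in a cyclic direct summand of A and Z₀ ≤ B is an infinite cyclic retract of B, which is conjugacy embedded in A ≀ B; moreover Conj_{(ℤ/pℤ)≀ℤ}(n) ≼ Conj_{A≀B}(n). -/
open Pointwise

namespace WreathDepth

/-!
In `A ≀ B` with `B` abelian, conjugating `⟨f, b⟩` by `⟨h, c⟩` gives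
`⟨z ↦ h z * f (c⁻¹ * z) * (h (b⁻¹ * z))⁻¹, b⟩`. For `x, y ∈ C ≀ Z` conjugate in `A ≀ B`
and `c ∈ Z`, restricting `h` to `Z` produces a conjugator in `A ≀ Z`; if `c ∉ Z`, the same
restriction shows that `x` and `y` are both conjugate to `⟨1, b⟩` inside `A ≀ Z`. When `b` has
infinite order such a conjugator takes values in `C`, because `h` is then `b`-invariant modulo `C`
and finitely supported; when `b = 1` the base part of the conjugator can simply be dropped. Hence
`C ≀ Z` is conjugacy embedded whenever `Z` is torsion-free.

A conjugacy embedded copy of `L` in `G` gives `Conj_L ≼ Conj_G`: finite quotients of `G` restrict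
to finite quotients of `L`, and word length in `L` is at most a constant times word length in `G`.
The cyclic retracts come from the structure theorem for finitely generated abelian groups.
-/

open Function Subgroup

section Conjugation

variable {A B : Type*} [Group A]

lemma wr_ext [Group B] {x y : Wr A B} (hr : x.right = y.right)
    (hl : ∀ z, (x.left : B → A) z = (y.left : B → A) z) : x = y :=
  SemidirectProduct.ext (Subtype.ext (funext hl)) hr

lemma wrSubgroup_mono_left [Group B] {C C' : Subgroup A} (h : C ≤ C') (Z : Subgroup B) :
    wrSubgroup C Z ≤ wrSubgroup C' Z :=
  fun _ ⟨hr, hC, hZ⟩ => ⟨hr, fun z => h (hC z), hZ⟩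

noncomputable def restrictBase [Group B] (Z : Set B) (f : base A B) : base A B :=
  ⟨Z.mulIndicator f,
    f.2.subset (by rw [Set.mulSupport_mulIndicator]; exact Set.inter_subset_right)⟩

lemma mk_restrictBase_mem_wrSubgroup [Group B] {Z : Subgroup B} (f : base A B) {c : B}
    (hc : c ∈ Z) : (⟨restrictBase Z f, c⟩ : Wr A B) ∈ wrSubgroup ⊤ Z :=
  ⟨hc, fun _ => trivial, fun _ hz => Set.mulIndicator_of_notMem hz _⟩

variable [CommGroup B]

lemma wr_conj_right (t x : Wr A B) : (t * x * t⁻¹).right = x.right :=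
  mul_inv_cancel_comm t.right x.right

lemma wr_conj_left_apply (t x : Wr A B) (z : B) :
    ((t * x * t⁻¹).left : B → A) z =
      (t.left : B → A) z * (x.left : B → A) (t.right⁻¹ * z) *
        ((t.left : B → A) (x.right⁻¹ * z))⁻¹ := by
  rw [wr_mul_left_apply, wr_mul_left_apply, wr_inv_left_apply]
  congr 3
  simp only [SemidirectProduct.mul_right, inv_inv, mul_inv_rev, ← mul_assoc,
    mul_inv_cancel_comm]

variable {Z : Subgroup B} {t x y : Wr A B}

lemma conj_restrictBase_eq (hx : x ∈ wrSubgroup ⊤ Z) (hy : y ∈ wrSubgroup ⊤ Z)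
    (hc : t.right ∈ Z) (h : t * x * t⁻¹ = y) :
    (⟨restrictBase Z t.left, t.right⟩ : Wr A B) * x * ⟨restrictBase Z t.left, t.right⟩⁻¹ = y := by
  refine wr_ext (by rw [wr_conj_right, ← h, wr_conj_right]) fun z => ?_
  rw [wr_conj_left_apply]
  by_cases hz : z ∈ Z
  · have hbz : x.right⁻¹ * z ∈ Z := mul_mem (inv_mem hx.1) hz
    rw [← h, wr_conj_left_apply]
    simp only [restrictBase, Set.mulIndicator_of_mem hz, Set.mulIndicator_of_mem hbz]
  · have hcz : t.right⁻¹ * z ∉ Z := (Z.mul_mem_cancel_left (inv_mem hc)).not.mpr hz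
    have hbz : x.right⁻¹ * z ∉ Z := (Z.mul_mem_cancel_left (inv_mem hx.1)).not.mpr hz
    simp only [restrictBase, Set.mulIndicator_of_notMem hz, Set.mulIndicator_of_notMem hbz,
      hx.2.2 _ hcz, hy.2.2 z hz, mul_one, inv_one]

lemma conj_restrictBase_eq_of_right_notMem (hx : x ∈ wrSubgroup ⊤ Z) (hy : y ∈ wrSubgroup ⊤ Z)
    (hc : t.right ∉ Z) (h : t * x * t⁻¹ = y) :
    (⟨restrictBase Z t.left, 1⟩ : Wr A B) * ⟨1, y.right⟩ * ⟨restrictBase Z t.left, 1⟩⁻¹ = y := by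
  subst h
  have hb : (t * x * t⁻¹).right = x.right := wr_conj_right t x
  refine wr_ext (wr_conj_right _ _) fun z => ?_
  by_cases hz : z ∈ Z
  · rw [wr_conj_left_apply, wr_conj_left_apply t, hb]
    have hcz : t.right⁻¹ * z ∉ Z := fun hcz => hc (by simpa using mul_mem hz (inv_mem hcz))
    have hbz : x.right⁻¹ * z ∈ Z := mul_mem (inv_mem hx.1) hz
    simp [restrictBase, Set.mulIndicator_of_mem hz, Set.mulIndicator_of_mem hbz, hx.2.2 _ hcz]
  · have hbz : x.right⁻¹ * z ∉ Z := (Z.mul_mem_cancel_left (inv_mem hx.1)).not.mpr hz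
    rw [hy.2.2 z hz, wr_conj_left_apply, hb]
    simp [restrictBase, Set.mulIndicator_of_notMem hz, Set.mulIndicator_of_notMem hbz]

end Conjugation

section ConjugacyEmbedded

variable {A B : Type*}

lemma exists_conj_eq_mem_wrSubgroup_top [Group A] [CommGroup B] {Z : Subgroup B}
    {x y : Wr A B} (hx : x ∈ wrSubgroup ⊤ Z) (hy : y ∈ wrSubgroup ⊤ Z) (h : IsConj x y) :
    ∃ t ∈ wrSubgroup ⊤ Z, t * x * t⁻¹ = y := by
  obtain ⟨t, ht⟩ := isConj_iff.mp h
  by_cases hc : t.right ∈ Z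
  · exact ⟨_, mk_restrictBase_mem_wrSubgroup t.left hc, conj_restrictBase_eq hx hy hc ht⟩
  -- Otherwise `x` and `y` are both conjugate to `⟨1, x.right⟩` inside `A ≀ Z`.
  have hb : y.right = x.right := ht ▸ wr_conj_right t x
  have hc' : t⁻¹.right ∉ Z := by simpa using hc
  have hy' := conj_restrictBase_eq_of_right_notMem hx hy hc ht
  have hx' := conj_restrictBase_eq_of_right_notMem hy hx hc' (by rw [← ht]; group)
  set s₁ : Wr A B := ⟨restrictBase Z t.left, 1⟩
  set s₂ : Wr A B := ⟨restrictBase Z t⁻¹.left, 1⟩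
  refine ⟨s₁ * s₂⁻¹, mul_mem (mk_restrictBase_mem_wrSubgroup _ (one_mem Z))
    (inv_mem (mk_restrictBase_mem_wrSubgroup _ (one_mem Z))), ?_⟩
  calc s₁ * s₂⁻¹ * x * (s₁ * s₂⁻¹)⁻¹
      = s₁ * s₂⁻¹ * (s₂ * ⟨1, y.right⟩ * s₂⁻¹) * (s₁ * s₂⁻¹)⁻¹ := by rw [hb, hx']
    _ = s₁ * ⟨1, y.right⟩ * s₁⁻¹ := by group
    _ = y := hy'

lemma mem_of_forall_mul_inv_comp_mem [Group A] [Group B] {C : Subgroup A} {b : B}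
    (hb : ¬IsOfFinOrder b) {h : B → A} (hfin : (mulSupport h).Finite)
    (hC : ∀ z, h z * (h (b⁻¹ * z))⁻¹ ∈ C) (z : B) : h z ∈ C := by
  by_contra hz
  -- the points where `h` leaves `C` would contain the infinite orbit `b⁻¹ ^ n * z`
  have hstep : ∀ w, h w ∉ C → h (b⁻¹ * w) ∉ C :=
    fun w hw hw' => hw (by simpa using mul_mem (hC w) hw')
  have horbit : ∀ n : ℕ, h (b⁻¹ ^ n * z) ∉ C := by
    intro n
    induction n with
    | zero => simpa using hz
    | succ n ih => simpa [pow_succ', mul_assoc] using hstep _ ih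
  have hinj : Injective fun n : ℕ => b⁻¹ ^ n * z :=
    (mul_left_injective z).comp
      (injective_pow_iff_not_isOfFinOrder.mpr (by rwa [isOfFinOrder_inv_iff]))
  exact Set.infinite_of_injective_forall_mem (s := mulSupport h) hinj
    (fun n => mem_mulSupport.mpr fun hn => horbit n (by rw [hn]; exact one_mem C)) hfin

variable [CommGroup A] [CommGroup B] {C : Subgroup A} {Z : Subgroup B}

lemma mem_wrSubgroup_of_conj_eq {t x y : Wr A B} (ht : t ∈ wrSubgroup ⊤ Z)
    (hx : x ∈ wrSubgroup C Z) (hy : y ∈ wrSubgroup C Z) (hb : ¬IsOfFinOrder x.right)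
    (h : t * x * t⁻¹ = y) : t ∈ wrSubgroup C Z := by
  refine ⟨ht.1, mem_of_forall_mul_inv_comp_mem hb t.left.2 fun z => ?_, ht.2.2⟩
  have hz := wr_conj_left_apply t x z
  rw [h] at hz
  have hcob : (t.left : B → A) z * ((t.left : B → A) (x.right⁻¹ * z))⁻¹ =
      (y.left : B → A) z * ((x.left : B → A) (t.right⁻¹ * z))⁻¹ := by
    rw [hz, mul_right_comm, mul_inv_cancel_right]
  rw [hcob]
  exact mul_mem (hy.2.1 z) (inv_mem (hx.2.1 _))

lemma conj_eq_conj_mk_one (t : Wr A B) {x : Wr A B} (hx : x.right = 1) :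
    t * x * t⁻¹ = ⟨1, t.right⟩ * x * ⟨1, t.right⟩⁻¹ :=
  wr_ext (by rw [wr_conj_right, wr_conj_right]) fun z => by
    rw [wr_conj_left_apply, wr_conj_left_apply, hx, inv_one, one_mul, mul_inv_cancel_comm]
    simp

theorem isConj_wrSubgroup_iff (C : Subgroup A) (hZ : ∀ b ∈ Z, IsOfFinOrder b → b = 1)
    (x y : wrSubgroup C Z) : IsConj x y ↔ IsConj (x : Wr A B) (y : Wr A B) := by
  refine ⟨(wrSubgroup C Z).subtype.map_isConj, fun h => isConj_iff.mpr ?_⟩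
  obtain ⟨t, ht, hconj⟩ := exists_conj_eq_mem_wrSubgroup_top
    (wrSubgroup_mono_left le_top Z x.2) (wrSubgroup_mono_left le_top Z y.2) h
  by_cases hb : (x : Wr A B).right = 1
  · refine ⟨⟨⟨1, t.right⟩, ht.1, fun _ => one_mem C, fun _ _ => rfl⟩, Subtype.ext ?_⟩
    rw [← hconj, conj_eq_conj_mk_one t hb]
    rfl
  · have hb' : ¬IsOfFinOrder (x : Wr A B).right := fun hf => hb (hZ _ x.2.1 hf)
    exact ⟨⟨t, mem_wrSubgroup_of_conj_eq ht x.2 y.2 hb' hconj⟩, Subtype.ext hconj⟩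

end ConjugacyEmbedded

lemma eq_one_of_mem_zpowers_of_isOfFinOrder {G : Type*} [Group G] {g : G}
    (hg : ¬IsOfFinOrder g) : ∀ x ∈ zpowers g, IsOfFinOrder x → x = 1 := by
  rintro _ ⟨k, rfl⟩ hk
  obtain ⟨n, hn, hpow⟩ := hk.exists_pow_eq_one
  have : k * n = 0 := injective_zpow_iff_not_isOfFinOrder.mpr hg (by simpa [zpow_mul] using hpow)
  simp [(mul_eq_zero.mp this).resolve_right (by omega)]

section WrMap

variable {A B A' B' : Type*} [Group A] [Group B] [Group A'] [Group B']

noncomputable def baseMap (iA : A' →* A) {iB : B' → B} (hiB : Injective iB) :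
    base A' B' →* base A B where
  toFun f := ⟨extend iB (iA ∘ f) 1, by
    rw [mem_base_iff, mulSupport_extend_one hiB]
    exact (f.2.subset (mulSupport_comp_subset iA.map_one _)).image iB⟩
  map_one' := Subtype.ext (by simpa using extend_one iB)
  map_mul' f g := Subtype.ext (by simpa using extend_mul iB (iA ∘ f) (iA ∘ g) 1 1)

variable (iA : A' →* A) {iB : B' →* B} (hiB : Injective iB)

lemma baseMap_apply_map (f : base A' B') (w : B') :
    (baseMap iA hiB f : B → A) (iB w) = iA ((f : B' → A') w) :=
  hiB.extend_apply _ _ _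

lemma baseMap_apply_of_notMem_range (f : base A' B') {z : B} (hz : z ∉ Set.range iB) :
    (baseMap iA hiB f : B → A) z = 1 :=
  extend_apply' _ _ _ fun h => hz h

noncomputable def wrMap : Wr A' B' →* Wr A B :=
  SemidirectProduct.map (baseMap iA hiB) iB fun b => by
    ext f z
    show (baseMap iA hiB _ : B → A) z = (baseMap iA hiB f : B → A) ((iB b)⁻¹ * z)
    by_cases hz : z ∈ Set.range iB
    · obtain ⟨w, rfl⟩ := hz
      rw [← map_inv, ← map_mul, baseMap_apply_map, baseMap_apply_map]
      rfl
    · have hz' : (iB b)⁻¹ * z ∉ Set.range iB := by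
        rintro ⟨w, hw⟩
        exact hz ⟨b * w, by rw [map_mul, hw, mul_inv_cancel_left]⟩
      rw [baseMap_apply_of_notMem_range iA hiB _ hz, baseMap_apply_of_notMem_range iA hiB _ hz']

lemma wrMap_left (x : Wr A' B') : (wrMap iA hiB x).left = baseMap iA hiB x.left := rfl

lemma wrMap_injective (hiA : Injective iA) : Injective (wrMap iA hiB) := by
  intro x y h
  refine wr_ext (hiB congr(($h).right)) fun w => hiA ?_
  rw [← baseMap_apply_map iA hiB, ← baseMap_apply_map iA hiB]
  exact congrFun congr((($h).left : B → A)) (iB w)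

lemma range_wrMap (hiA : Injective iA) :
    (wrMap iA hiB).range = wrSubgroup iA.range iB.range := by
  ext x
  constructor
  · rintro ⟨w, rfl⟩
    refine ⟨⟨w.right, rfl⟩, fun z => ?_, fun z hz => baseMap_apply_of_notMem_range iA hiB _ hz⟩
    by_cases hz : z ∈ Set.range iB
    · obtain ⟨v, rfl⟩ := hz
      exact ⟨_, (baseMap_apply_map iA hiB _ v).symm⟩
    · rw [wrMap_left, baseMap_apply_of_notMem_range iA hiB _ hz]
      exact one_mem _
  · rintro ⟨⟨r, hr⟩, hC, hZ⟩
    choose F hF using fun w => hC (iB w)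
    have hFfin : (mulSupport F).Finite := by
      refine (x.left.2.preimage hiB.injOn).subset fun w hw h1 => hw ?_
      exact hiA (by rw [hF, map_one]; exact h1)
    refine ⟨⟨⟨F, hFfin⟩, r⟩, wr_ext hr fun z => ?_⟩
    by_cases hz : z ∈ Set.range iB
    · obtain ⟨v, rfl⟩ := hz
      exact (baseMap_apply_map iA hiB _ v).trans (hF v)
    · exact (baseMap_apply_of_notMem_range iA hiB _ hz).trans (hZ z hz).symm

noncomputable def wrEquivWrSubgroup (hiA : Injective iA) {C : Subgroup A} {Z : Subgroup B}
    (hC : iA.range = C) (hZ : iB.range = Z) : Wr A' B' ≃* wrSubgroup C Z :=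
  (MonoidHom.ofInjective (wrMap_injective iA hiB hiA)).trans
    (MulEquiv.subgroupCongr (by rw [range_wrMap iA hiB hiA, hC, hZ]))

end WrMap

section ConjugacyDepth

variable {G L : Type*} [Group G] [Group L] {S : Set G}

lemma ball_mono {m n : ℕ} (h : m ≤ n) : ball G S m ⊆ ball G S n :=
  fun _ ⟨w, hw, hlen, hprod⟩ => ⟨w, hw, hlen.trans h, hprod⟩

lemma one_mem_ball : (1 : G) ∈ ball G S 0 := ⟨[], by simp, le_rfl, rfl⟩

lemma mul_mem_ball {g h : G} {m n : ℕ} (hg : g ∈ ball G S m) (hh : h ∈ ball G S n) :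
    g * h ∈ ball G S (m + n) := by
  obtain ⟨u, hu, hulen, rfl⟩ := hg
  obtain ⟨v, hv, hvlen, rfl⟩ := hh
  refine ⟨u ++ v, fun x hx => ?_, by simpa using add_le_add hulen hvlen, List.prod_append⟩
  rcases List.mem_append.mp hx with hx | hx
  exacts [hu x hx, hv x hx]

lemma exists_mem_ball (hS : closure S = ⊤) (g : G) : ∃ n, g ∈ ball G S n := by
  have hg : g ∈ Submonoid.closure (S ∪ S⁻¹) := by
    rw [← Subgroup.closure_toSubmonoid, hS]
    trivial
  obtain ⟨w, hw, rfl⟩ := Submonoid.exists_list_of_mem_closure hg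
  exact ⟨w.length, w, hw, le_rfl, rfl⟩

lemma map_mem_ball (ψ : L →* G) {S₁ : Set L} {K : ℕ} (hK : ∀ s ∈ S₁ ∪ S₁⁻¹, ψ s ∈ ball G S K)
    {g : L} {n : ℕ} (hg : g ∈ ball L S₁ n) : ψ g ∈ ball G S (K * n) := by
  obtain ⟨w, hw, hlen, rfl⟩ := hg
  refine ball_mono (Nat.mul_le_mul_left K hlen) ?_
  clear hlen
  induction w with
  | nil => simpa using one_mem_ball
  | cons s w ih =>
    rw [List.prod_cons, map_mul, List.length_cons, Nat.mul_succ, add_comm]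
    exact mul_mem_ball (hK s (hw s List.mem_cons_self))
      (ih fun x hx => hw x (List.mem_cons_of_mem s hx))

lemma exists_map_mem_ball (ψ : L →* G) {S₁ : Set L} (hS₁ : S₁.Finite) (hS : closure S = ⊤) :
    ∃ K, ∀ n, ∀ g ∈ ball L S₁ n, ψ g ∈ ball G S (K * n) := by
  choose N hN using fun s => exists_mem_ball hS (ψ s)
  obtain ⟨K, hK⟩ := ((hS₁.union hS₁.inv).image N).bddAbove
  exact ⟨K, fun n g => map_mem_ball ψ fun s hs => ball_mono (hK ⟨s, hs, rfl⟩) (hN s)⟩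

lemma CD_le_CD_map (ψ : L →* G) (x y : L) : CD L x y ≤ CD G (ψ x) (ψ y) := by
  refine le_sInf ?_
  rintro _ ⟨Q, _, _, π, -, hnc, rfl⟩
  let π' := π.comp ψ
  have hπ' : CD L x y ≤ Nat.card π'.range := by
    refine sInf_le ⟨π'.range, inferInstance, inferInstance, π'.rangeRestrict,
      π'.rangeRestrict_surjective, fun hc => hnc ?_, rfl⟩
    exact π'.range.subtype.map_isConj hc
  exact hπ'.trans (by exact_mod_cast Nat.card_le_card_of_injective _ Subtype.val_injective)

lemma CD_le_conjDepthFn {x y : G} {n : ℕ} (hx : x ∈ ball G S n) (hy : y ∈ ball G S n)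
    (hxy : ¬IsConj x y) : CD G x y ≤ conjDepthFn G S n :=
  le_iSup_of_le x <| le_iSup_of_le hx <| le_iSup_of_le y <| le_iSup_of_le hy <|
    le_iSup_of_le hxy le_rfl

theorem preceq_conjDepthFn_of_isConj_imp (ψ : L →* G)
    (hψ : ∀ x y, IsConj (ψ x) (ψ y) → IsConj x y) {S₁ : Set L} (hS₁ : S₁.Finite)
    (hS : closure S = ⊤) : Preceq (conjDepthFn L S₁) (conjDepthFn G S) := by
  obtain ⟨K, hK⟩ := exists_map_mem_ball ψ hS₁ hS
  refine ⟨K + 1, fun n => ?_⟩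
  have hball : ∀ g ∈ ball L S₁ n, ψ g ∈ ball G S ((K + 1) * n) :=
    fun g hg => ball_mono (Nat.mul_le_mul_right n K.le_succ) (hK n g hg)
  calc conjDepthFn L S₁ n ≤ conjDepthFn G S ((K + 1) * n) :=
        iSup₂_le fun x hx => iSup₂_le fun y hy => iSup_le fun hxy =>
          (CD_le_CD_map ψ x y).trans <|
            CD_le_conjDepthFn (hball x hx) (hball y hy) fun h => hxy (hψ x y h)
    _ ≤ ((K + 1 : ℕ) : ℕ∞) * conjDepthFn G S ((K + 1) * n) :=
        le_mul_of_one_le_left' (by exact_mod_cast K.succ_pos)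

end ConjugacyDepth

section Retracts

lemma isRetractSubgroup_zpowers_of_leftInverse {G M : Type*} [Group G] [Group M] (π : G →* M)
    (σ : M →* G) (hπσ : ∀ m, π (σ m) = m) {m : M} (hm : ∀ x : M, x ∈ zpowers m) :
    IsRetractSubgroup (zpowers (σ m)) := by
  refine ⟨σ.comp π, fun x => ?_, ?_⟩
  · obtain ⟨k, hk⟩ := hm (π x)
    exact ⟨k, by simp [← hk]⟩
  · rintro _ ⟨k, rfl⟩
    simp [hπσ]

lemma exists_isRetractSubgroup_zpowers_of_dvd_card (A : Type*) [CommGroup A] [Finite A] {p : ℕ}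
    (hp : p.Prime) (hdvd : p ∣ Nat.card A) :
    ∃ a : A, p ∣ orderOf a ∧ IsRetractSubgroup (zpowers a) := by
  classical
  obtain ⟨ι, _, m, hm, ⟨e⟩⟩ := CommGroup.equiv_prod_multiplicative_zmod_of_finite A
  have hcard : Nat.card A = ∏ i, m i := by
    rw [Nat.card_congr e.toEquiv, Nat.card_pi]
    exact Finset.prod_congr rfl fun i _ =>
      (Nat.card_congr Multiplicative.toAdd).trans (Nat.card_zmod _)
  obtain ⟨i, -, hpi⟩ := (hp.prime.dvd_finsetProd_iff m).mp (hcard ▸ hdvd)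
  let π : A →* Multiplicative (ZMod (m i)) := (Pi.evalMonoidHom _ i).comp e.toMonoidHom
  let σ : Multiplicative (ZMod (m i)) →* A :=
    e.symm.toMonoidHom.comp (MonoidHom.mulSingle (fun j => Multiplicative (ZMod (m j))) i)
  have hπσ : ∀ x, π (σ x) = x := by simp [π, σ]
  refine ⟨σ (.ofAdd 1), ?_, isRetractSubgroup_zpowers_of_leftInverse π σ hπσ fun x => ?_⟩
  · rwa [orderOf_injective σ (LeftInverse.injective hπσ), orderOf_ofAdd_eq_addOrderOf,
      ZMod.addOrderOf_one]
  · obtain ⟨k, hk⟩ := ZMod.intCast_surjective x.toAdd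
    exact ⟨k, by simp [← ofAdd_zsmul, hk]⟩

lemma exists_isRetractSubgroup_zpowers_not_isOfFinOrder (B : Type*) [CommGroup B] [Infinite B]
    (hB : Group.FG B) : ∃ b : B, ¬IsOfFinOrder b ∧ IsRetractSubgroup (zpowers b) := by
  have : AddGroup.FG (Additive B) := GroupFG.iff_add_fg.mp hB
  obtain ⟨n, ι, _, q, hq, f, ⟨e⟩⟩ := AddCommGroup.equiv_free_prod_directSum_zmod (Additive B)
  obtain ⟨i⟩ : Nonempty (Fin n) := by
    by_contra hn
    have := not_nonempty_iff.mp hn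
    have := fun i => NeZero.mk (pow_ne_zero (f i) (hq i).ne_zero)
    have : Finite (DirectSum ι fun i => ZMod (q i ^ f i)) :=
      Finite.of_equiv _ DFinsupp.equivFunOnFintype.symm
    have := Finite.of_equiv _ e.symm.toEquiv
    exact not_finite (Additive B)
  let π : B →* Multiplicative ℤ := AddMonoidHom.toMultiplicativeRight
    ((Finsupp.applyAddHom i).comp ((AddMonoidHom.fst _ _).comp e.toAddMonoidHom))
  let σ : Multiplicative ℤ →* B := AddMonoidHom.toMultiplicativeLeft
    (e.symm.toAddMonoidHom.comp ((AddMonoidHom.inl _ _).comp (Finsupp.singleAddHom i)))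
  have hπσ : ∀ x, π (σ x) = x := by simp [π, σ]
  refine ⟨σ (.ofAdd 1), fun hfin => ?_,
    isRetractSubgroup_zpowers_of_leftInverse π σ hπσ fun x => ⟨x.toAdd, by simp [← ofAdd_zsmul]⟩⟩
  have h := π.isOfFinOrder hfin
  rw [hπσ] at h
  exact not_isOfFinAddOrder_of_isAddTorsionFree one_ne_zero (isOfFinOrder_ofAdd_iff.mp h)

end Retracts

lemma exists_injective_zmod_range_eq_zpowers {A : Type*} [Group A] {c : A} {n : ℕ}
    (hc : orderOf c = n) :
    ∃ χ : Multiplicative (ZMod n) →* A, Injective χ ∧ χ.range = zpowers c := by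
  obtain ⟨e⟩ : Nonempty (Multiplicative (ZMod n) ≃* zpowers c) :=
    ⟨zmodMulEquivOfGenerator (g := ⟨c, mem_zpowers c⟩) (fun ⟨_, k, hk⟩ => ⟨k, Subtype.ext hk⟩)
      (by rw [Nat.card_zpowers, hc])⟩
  refine ⟨(zpowers c).subtype.comp e.toMonoidHom, Subtype.val_injective.comp e.injective, ?_⟩
  rw [MonoidHom.range_comp, MonoidHom.range_eq_top.mpr (e.surjective : Surjective e.toMonoidHom),
    ← MonoidHom.range_eq_map, range_subtype]

/-- If `A` is a finite abelian group, `p` a prime dividing `|A|`,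
and `B` an infinite finitely generated abelian group, then `A ≀ B` contains a
conjugacy embedded subgroup of the form `C ≀ Z₀` isomorphic to `(ℤ/pℤ) ≀ ℤ`,
where `C ≤ A` has order `p` and lies in a cyclic direct summand (retract) of `A`
and `Z₀ ≤ B` is an infinite cyclic retract of `B`; moreover
`Conj_{(ℤ/pℤ) ≀ ℤ}(n) ≼ Conj_{A ≀ B}(n)`. -/
theorem lamplighter_conjugacy_embedded (A B : Type*) [CommGroup A] [Finite A]
    [CommGroup B] [Infinite B] (hBfg : Group.FG B)
    (p : ℕ) (hp : p.Prime) (hdvd : p ∣ Nat.card A) :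
    ∃ (C : Subgroup A) (Z₀ : Subgroup B),
      Nat.card C = p ∧
      (∃ a : A, C ≤ Subgroup.zpowers a ∧ IsRetractSubgroup (Subgroup.zpowers a)) ∧
      (∃ b : B, ¬ IsOfFinOrder b ∧ Z₀ = Subgroup.zpowers b) ∧
      IsRetractSubgroup Z₀ ∧
      Nonempty (wrSubgroup C Z₀ ≃* Wr (Multiplicative (ZMod p)) (Multiplicative ℤ)) ∧
      (∀ x y : wrSubgroup C Z₀, IsConj x y ↔ IsConj (x : Wr A B) (y : Wr A B)) ∧
      (∀ S₁ : Set (Wr (Multiplicative (ZMod p)) (Multiplicative ℤ)), GeneratingSet S₁ →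
        ∀ S₂ : Set (Wr A B), GeneratingSet S₂ →
          Preceq (conjDepthFn (Wr (Multiplicative (ZMod p)) (Multiplicative ℤ)) S₁)
            (conjDepthFn (Wr A B) S₂)) := by
  obtain ⟨a, hpa, haret⟩ := exists_isRetractSubgroup_zpowers_of_dvd_card A hp hdvd
  have : Fact p.Prime := ⟨hp⟩
  obtain ⟨⟨c, hca⟩, hc⟩ := exists_prime_orderOf_dvd_card' (G := zpowers a) p
    (by rwa [Nat.card_zpowers])
  rw [← Subgroup.orderOf_coe] at hc
  obtain ⟨b₀, hb₀, hbret⟩ := exists_isRetractSubgroup_zpowers_not_isOfFinOrder B hBfg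
  obtain ⟨χ, hχ, hχrange⟩ := exists_injective_zmod_range_eq_zpowers hc
  let e := wrEquivWrSubgroup χ (injective_zpow_iff_not_isOfFinOrder.mpr hb₀) hχ hχrange
    (range_zpowersHom b₀)
  have hce := isConj_wrSubgroup_iff (zpowers c) (eq_one_of_mem_zpowers_of_isOfFinOrder hb₀)
  refine ⟨zpowers c, zpowers b₀, by rw [Nat.card_zpowers, hc], ⟨a, zpowers_le.mpr hca, haret⟩,
    ⟨b₀, hb₀, rfl⟩, hbret, ⟨e.symm⟩, hce, fun S₁ hS₁ S₂ hS₂ =>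
      preceq_conjDepthFn_of_isConj_imp ((wrSubgroup _ _).subtype.comp e.toMonoidHom)
        (fun x y h => ?_) hS₁.1 hS₂.2⟩
  simpa using e.symm.toMonoidHom.map_isConj ((hce (e x) (e y)).mpr h)

end WreathDepth
end

section
/- Let k ≥ 2 and let b = (b₁, …, b_k) ∈ ℤ^k be nonzero, and let φ_b : ℤ^k → ℤ be the homomorphism φ_b(u) = u · b = Σᵢ uᵢbᵢ. Then there exist vectors λ⁽¹⁾, …, λ⁽ᵏ⁻¹⁾ ∈ ℤ^k generating the kernel of φ_b such that ‖λ⁽ⁱ⁾‖₁ ≤ 2^{k−1}‖b‖₁ for all i, where ‖v‖₁ = Σᵢ |vᵢ| denotes the ℓ¹-norm on ℤ^k. -/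
/-!
Put a nonzero entry of least absolute value last and induct on the dimension, splitting
`b = (x, t)`. With `g' = gcd t`, the first coordinates of kernel vectors of `b` are exactly the
multiples of `p = g' / gcd x g'`, so the kernel is generated by the (zero-padded) kernel of `t`
and one vector `(p, μ)` with `μ ⬝ t = -p x`. A short such `μ` comes from a Bézout lemma with
norm control, `gcd t * ‖μ‖₁ ≤ |c| + ‖t‖₁` for `μ ⬝ t = c`: solve one coordinate at a time, taking
each coefficient as a balanced residue; the induction closes because the gcd of the remaining
coordinates is at most the absolute value of every nonzero entry before the last one. This gives
generators of norm at most `2 ‖b‖₁`.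
-/

open Finset Matrix

theorem exists_dvd_sub_two_mul_abs_le (x M : ℤ) (hM : 0 < M) :
    ∃ r, M ∣ x - r ∧ 2 * |r| ≤ M := by
  lift M to ℕ using hM.le
  refine ⟨x.bmod M, Int.dvd_self_sub_bmod, ?_⟩
  have h₁ := Int.le_bmod (x := x) (Int.natCast_pos.1 hM)
  have h₂ := Int.bmod_lt (x := x) (Int.natCast_pos.1 hM)
  rcases abs_cases (x.bmod M) with ⟨h, -⟩ | ⟨h, -⟩ <;> omega

theorem gcd_pos_of_ne_zero_right (x : ℤ) {y : ℤ} (hy : y ≠ 0) : 0 < gcd x y := by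
  rw [← Int.coe_gcd]; exact Int.natCast_pos.2 (Int.gcd_pos_of_ne_zero_right x hy)

theorem exists_small_dvd_sub_mul_of_gcd_dvd (x y c : ℤ) (hy : 0 < y) (hc : gcd x y ∣ c) :
    ∃ l, y ∣ c - l * x ∧ 2 * (gcd x y * |l|) ≤ y := by
  have hbez := Int.gcd_eq_gcd_ab x y
  rw [Int.coe_gcd] at hbez
  have hg := gcd_pos_of_ne_zero_right x hy.ne'
  obtain ⟨x', hx⟩ := gcd_dvd_left x y
  obtain ⟨M, hM⟩ := gcd_dvd_right x y
  obtain ⟨c', rfl⟩ := hc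
  have hMpos : 0 < M := pos_of_mul_pos_right (hM ▸ hy) hg.le
  -- Reduce the Bézout solution `gcdA x y * c'` modulo `M = y / gcd x y` to a balanced residue.
  obtain ⟨r, ⟨k, hk⟩, hr⟩ := exists_dvd_sub_two_mul_abs_le (x.gcdA y * c') M hMpos
  refine ⟨r, ⟨c' * x.gcdB y + k * x', ?_⟩, ?_⟩
  · linear_combination c' * hbez + x * hk + k * M * hx - k * x' * hM
  · calc 2 * (gcd x y * |r|) = gcd x y * (2 * |r|) := by ring
      _ ≤ gcd x y * M := by gcongr
      _ = y := hM.symm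

theorem div_gcd_dvd_of_dvd_mul {x y w : ℤ} (hy : y ≠ 0) (h : y ∣ w * x) : y / gcd x y ∣ w := by
  have hg := gcd_pos_of_ne_zero_right x hy
  have hcop := Int.gcd_div_gcd_div_gcd (Int.gcd_pos_of_ne_zero_right x hy)
  rw [Int.coe_gcd] at hcop
  refine Int.dvd_of_dvd_mul_left_of_gcd_one (c := x / gcd x y) ?_ (by rwa [Int.gcd_comm])
  refine (mul_dvd_mul_iff_left hg.ne').1 ?_
  rwa [Int.mul_ediv_cancel' (gcd_dvd_right x y), mul_left_comm,
    Int.mul_ediv_cancel' (gcd_dvd_left x y)]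

section Fintype

variable {ι : Type*} [Fintype ι]

def l1Norm (v : ι → ℤ) : ℤ := ∑ i, |v i|

theorem l1Norm_nonneg (v : ι → ℤ) : 0 ≤ l1Norm v :=
  sum_nonneg fun i _ => abs_nonneg (v i)

theorem abs_le_l1Norm (v : ι → ℤ) (i : ι) : |v i| ≤ l1Norm v :=
  single_le_sum (fun j _ => abs_nonneg (v j)) (mem_univ i)

theorem l1Norm_comp_equiv {κ : Type*} [Fintype κ] (v : κ → ℤ) (σ : ι ≃ κ) :
    l1Norm (v ∘ σ) = l1Norm v :=
  Equiv.sum_comp σ fun i => |v i|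

theorem gcd_univ_pos {a : ι → ℤ} {i : ι} (hi : a i ≠ 0) : 0 < univ.gcd a := by
  refine lt_of_le_of_ne ?_ (fun h => hi (gcd_eq_zero_iff.1 h.symm i (mem_univ i)))
  rw [← Finset.normalize_gcd]
  exact Int.abs_eq_normalize _ ▸ abs_nonneg _

theorem gcd_univ_le_abs {a : ι → ℤ} {i : ι} (hi : a i ≠ 0) : univ.gcd a ≤ |a i| :=
  Int.le_of_dvd (abs_pos.2 hi) ((dvd_abs _ _).2 (gcd_dvd (mem_univ i)))

theorem gcd_univ_dvd_dotProduct (w t : ι → ℤ) : univ.gcd t ∣ w ⬝ᵥ t :=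
  dvd_sum fun i _ => dvd_mul_of_dvd_right (gcd_dvd (mem_univ i)) (w i)

def dotProductKer (b : ι → ℤ) : AddSubgroup (ι → ℤ) where
  carrier := {w | w ⬝ᵥ b = 0}
  add_mem' := by simp_all [add_dotProduct]
  zero_mem' := zero_dotProduct b
  neg_mem' := by simp_all [neg_dotProduct]

@[simp]
theorem mem_dotProductKer {b w : ι → ℤ} : w ∈ dotProductKer b ↔ w ⬝ᵥ b = 0 :=
  Iff.rfl

end Fintype

theorem l1Norm_cons {n : ℕ} (x : ℤ) (v : Fin n → ℤ) :
    l1Norm (vecCons x v) = |x| + l1Norm v := by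
  simp [l1Norm, Fin.sum_univ_succ]

theorem gcd_univ_cons {n : ℕ} (x : ℤ) (v : Fin n → ℤ) :
    univ.gcd (vecCons x v) = gcd x (univ.gcd v) := by
  rw [Fin.univ_succ, cons_eq_insert, gcd_insert, map_eq_image, gcd_image]
  simp [Function.comp_def]

def LastEntryMinAbs {n : ℕ} (a : Fin (n + 1) → ℤ) : Prop :=
  a (Fin.last n) ≠ 0 ∧ ∀ j, a j ≠ 0 → |a (Fin.last n)| ≤ |a j|

namespace LastEntryMinAbs

variable {n : ℕ} {x : ℤ} {v : Fin (n + 1) → ℤ}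

theorem tail (h : LastEntryMinAbs (vecCons x v)) : LastEntryMinAbs v :=
  ⟨h.1, fun j hj => h.2 j.succ hj⟩

theorem gcd_tail_le_abs_head (h : LastEntryMinAbs (vecCons x v)) (hx : x ≠ 0) :
    univ.gcd v ≤ |x| :=
  (gcd_univ_le_abs h.tail.1).trans (h.2 0 hx)

end LastEntryMinAbs

theorem exists_dotProduct_eq_of_gcd_dvd {n : ℕ} {a : Fin (n + 1) → ℤ} (ha : LastEntryMinAbs a)
    {c : ℤ} (hc : univ.gcd a ∣ c) :
    ∃ μ, μ ⬝ᵥ a = c ∧ univ.gcd a * l1Norm μ ≤ |c| + l1Norm a := by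
  induction n generalizing c with
  | zero =>
    have hg : univ.gcd a = |a 0| := by
      rw [show (univ : Finset (Fin 1)) = {0} from rfl, gcd_singleton, Int.abs_eq_normalize]
    have ha0 : a 0 ∣ c := (abs_dvd _ _).1 (hg ▸ hc)
    refine ⟨fun _ => c / a 0, by simp [dotProduct, Int.ediv_mul_cancel ha0], ?_⟩
    have hμ : |a 0| * |c / a 0| = |c| := by rw [← abs_mul, Int.mul_ediv_cancel' ha0]
    rw [hg, l1Norm, l1Norm, Fin.sum_univ_succ, Fin.sum_univ_succ, Fin.sum_univ_zero,
      Fin.sum_univ_zero, add_zero, add_zero, hμ]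
    linarith [abs_nonneg (a 0)]
  | succ n ih =>
    obtain ⟨x, v, rfl⟩ : ∃ x v, a = vecCons x v :=
      ⟨vecHead a, vecTail a, (cons_head_tail a).symm⟩
    rw [gcd_univ_cons] at hc ⊢
    set g' := univ.gcd v
    have hg' : 0 < g' := gcd_univ_pos ha.tail.1
    have hg : 0 < gcd x g' := gcd_pos_of_ne_zero_right x hg'.ne'
    have hgg' : gcd x g' ≤ g' := Int.le_of_dvd hg' (gcd_dvd_right x g')
    obtain ⟨l, hl, hl_small⟩ := exists_small_dvd_sub_mul_of_gcd_dvd x g' c hg' hc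
    obtain ⟨μ, hμ, hμ_norm⟩ := ih ha.tail hl
    refine ⟨vecCons l μ, by simp [hμ], ?_⟩
    rw [l1Norm_cons, l1Norm_cons]
    -- `g' ≤ |x|` unless `x = 0`, and then `gcd x g' = g'` forces `l = 0`.
    have hlx : gcd x g' * |l| * (g' + |x|) ≤ g' * |x| := by
      by_cases hx : x = 0
      · have : gcd x g' = g' := by
          rw [hx, gcd_zero_left, ← Int.abs_eq_normalize, abs_of_pos hg']
        have : |l| = 0 := by nlinarith [abs_nonneg l]
        rw [this, mul_zero, zero_mul]
        positivity
      · nlinarith [ha.gcd_tail_le_abs_head hx, abs_nonneg x, abs_nonneg l]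
    have hcx : |c - l * x| ≤ |c| + |l| * |x| := abs_mul l x ▸ abs_sub c (l * x)
    refine le_of_mul_le_mul_left ?_ hg'
    calc g' * (gcd x g' * (|l| + l1Norm μ))
        = gcd x g' * |l| * g' + gcd x g' * (g' * l1Norm μ) := by ring
      _ ≤ gcd x g' * |l| * g' + gcd x g' * (|c| + |l| * |x| + l1Norm v) := by
          gcongr; linarith
      _ = gcd x g' * |l| * (g' + |x|) + gcd x g' * (|c| + l1Norm v) := by ring
      _ ≤ g' * |x| + g' * (|c| + l1Norm v) := by
          gcongr; linarith [abs_nonneg c, l1Norm_nonneg v]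
      _ = g' * (|c| + (|x| + l1Norm v)) := by ring

theorem vecCons_zero_mem_closure_range {α κ : Type*} [AddGroup α] {n : ℕ}
    {lam : κ → Fin n → α} {v : Fin n → α} (hv : v ∈ AddSubgroup.closure (Set.range lam)) :
    vecCons 0 v ∈ AddSubgroup.closure (Set.range fun i => vecCons 0 (lam i)) := by
  induction hv using AddSubgroup.closure_induction with
  | mem _ h => obtain ⟨i, rfl⟩ := h; exact AddSubgroup.subset_closure ⟨i, rfl⟩
  | zero => simp
  | add _ _ _ _ h₁ h₂ => simpa using add_mem h₁ h₂
  | neg _ _ h => simpa using neg_mem h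

theorem closure_range_cons_eq_dotProductKer {n m : ℕ} {x : ℤ} {t : Fin n → ℤ}
    {lam : Fin m → Fin n → ℤ} (hspan : AddSubgroup.closure (Set.range lam) = dotProductKer t)
    {lam₀ : Fin (n + 1) → ℤ} (h₀ : lam₀ ⬝ᵥ vecCons x t = 0)
    (hhead : ∀ w, w ⬝ᵥ vecCons x t = 0 → vecHead lam₀ ∣ vecHead w) :
    AddSubgroup.closure (Set.range (vecCons lam₀ fun i => vecCons 0 (lam i))) =
      dotProductKer (vecCons x t) := by
  apply le_antisymm
  · rw [AddSubgroup.closure_le, range_cons]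
    rintro _ (rfl | ⟨i, rfl⟩)
    · exact h₀
    · have : lam i ∈ dotProductKer t := hspan ▸ AddSubgroup.subset_closure ⟨i, rfl⟩
      simpa [cons_dotProduct_cons] using this
  · intro w hw
    obtain ⟨q, hq⟩ := hhead w hw
    set r := w - q • lam₀
    have hr_head : vecHead r = 0 := by
      simp only [vecHead, r, Pi.sub_apply, Pi.smul_apply, smul_eq_mul] at hq ⊢
      linear_combination hq
    have hr : r = vecCons 0 (vecTail r) := by rw [← hr_head, cons_head_tail]
    have hr_ker : r ⬝ᵥ vecCons x t = 0 := by
      rw [sub_dotProduct, smul_dotProduct, mem_dotProductKer.1 hw, h₀, smul_zero, sub_zero]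
    have hr_tail : vecTail r ∈ AddSubgroup.closure (Set.range lam) := by
      rw [hr, cons_dotProduct_cons, zero_mul, zero_add] at hr_ker
      rwa [hspan, mem_dotProductKer]
    rw [show w = q • lam₀ + r from (add_sub_cancel _ _).symm, hr]
    refine add_mem (AddSubgroup.zsmul_mem _ (AddSubgroup.subset_closure ?_) q) ?_
    · exact Set.mem_range_self 0
    · refine AddSubgroup.closure_mono ?_ (vecCons_zero_mem_closure_range hr_tail)
      rw [range_cons]
      exact Set.subset_union_right

theorem exists_dotProduct_eq_zero_head_dvd {n : ℕ} {x : ℤ} {t : Fin (n + 1) → ℤ}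
    (hb : LastEntryMinAbs (vecCons x t)) :
    ∃ lam₀, lam₀ ⬝ᵥ vecCons x t = 0 ∧
      (∀ w, w ⬝ᵥ vecCons x t = 0 → vecHead lam₀ ∣ vecHead w) ∧
      l1Norm lam₀ ≤ |x| + 2 * l1Norm t := by
  set g' := univ.gcd t
  have hg' : 0 < g' := gcd_univ_pos hb.tail.1
  -- `p = g' / gcd x g'` is the least positive first coordinate of a kernel vector.
  obtain ⟨x', hx⟩ := gcd_dvd_left x g'
  obtain ⟨p, hp⟩ := gcd_dvd_right x g'
  have hg : 0 < gcd x g' := gcd_pos_of_ne_zero_right x hg'.ne'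
  obtain ⟨μ, hμ, hμ_norm⟩ :=
    exists_dotProduct_eq_of_gcd_dvd hb.tail (dvd_neg.2 (dvd_mul_right g' x'))
  refine ⟨vecCons p μ, ?_, fun w hw => ?_, ?_⟩
  · rw [cons_dotProduct_cons, hμ]
    linear_combination p * hx - x' * hp
  · rw [← cons_head_tail w, cons_dotProduct_cons] at hw
    have hdvd : g' ∣ vecHead w * x :=
      eq_neg_of_add_eq_zero_left hw ▸ dvd_neg.2 (gcd_univ_dvd_dotProduct _ t)
    rw [head_cons, ← Int.ediv_eq_of_eq_mul_right hg.ne' hp]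
    exact div_gcd_dvd_of_dvd_mul hg'.ne' hdvd
  · have hp_pos : 0 < p := pos_of_mul_pos_right (hp ▸ hg') hg.le
    have hg'_le : g' ≤ l1Norm t := (gcd_univ_le_abs hb.tail.1).trans (abs_le_l1Norm t _)
    have hp_le : p ≤ g' := hp ▸ le_mul_of_one_le_left hp_pos.le hg
    have hx'_le : |x'| ≤ |x| := by
      rw [hx, abs_mul, abs_of_pos hg]
      exact le_mul_of_one_le_left (abs_nonneg _) hg
    have hμ_le : l1Norm μ ≤ |x| + l1Norm t := by
      refine le_of_mul_le_mul_left ?_ hg'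
      calc g' * l1Norm μ ≤ |-(g' * x')| + l1Norm t := hμ_norm
        _ = g' * |x'| + l1Norm t := by rw [abs_neg, abs_mul, abs_of_pos hg']
        _ ≤ g' * (|x| + l1Norm t) := by nlinarith [l1Norm_nonneg t]
    rw [l1Norm_cons, abs_of_pos hp_pos]
    linarith

theorem exists_closure_range_eq_dotProductKer {n : ℕ} {b : Fin (n + 1) → ℤ}
    (hb : LastEntryMinAbs b) :
    ∃ lam : Fin n → Fin (n + 1) → ℤ, AddSubgroup.closure (Set.range lam) = dotProductKer b ∧
      ∀ i, l1Norm (lam i) ≤ 2 * l1Norm b := by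
  induction n with
  | zero =>
    refine ⟨![], ?_, fun i => i.elim0⟩
    have hb₀ : b 0 ≠ 0 := hb.1
    ext w
    simp only [Set.range_eq_empty, AddSubgroup.closure_empty, AddSubgroup.mem_bot,
      mem_dotProductKer]
    refine ⟨fun h => h ▸ zero_dotProduct b, fun h => funext fun j => ?_⟩
    fin_cases j
    simpa [dotProduct, hb₀] using h
  | succ n ih =>
    obtain ⟨x, t, rfl⟩ : ∃ x t, b = vecCons x t :=
      ⟨vecHead b, vecTail b, (cons_head_tail b).symm⟩
    obtain ⟨lam, hspan, hnorm⟩ := ih hb.tail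
    obtain ⟨lam₀, h₀, hhead, hnorm₀⟩ := exists_dotProduct_eq_zero_head_dvd hb
    refine ⟨vecCons lam₀ fun i => vecCons 0 (lam i),
      closure_range_cons_eq_dotProductKer hspan h₀ hhead, fun i => ?_⟩
    rw [l1Norm_cons]
    have := abs_nonneg x
    refine i.cases ?_ fun i => ?_
    · rw [cons_val_zero]
      linarith
    · rw [cons_val_succ, l1Norm_cons, abs_zero, zero_add]
      linarith [hnorm i]

theorem exists_perm_lastEntryMinAbs {n : ℕ} {b : Fin (n + 1) → ℤ} (hb : b ≠ 0) :
    ∃ σ : Equiv.Perm (Fin (n + 1)), LastEntryMinAbs (b ∘ σ) := by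
  obtain ⟨j, hj⟩ := Function.ne_iff.1 hb
  obtain ⟨j₀, hj₀, hmin⟩ :=
    exists_min_image ({j | b j ≠ 0} : Finset _) (fun j => |b j|) ⟨j, by simpa using hj⟩
  refine ⟨Equiv.swap j₀ (Fin.last n), ?_, fun i hi => ?_⟩
  · simpa using hj₀
  · simpa using hmin _ (by simpa using hi)

theorem closure_range_comp_equiv_eq_dotProductKer {ι ι' κ : Type*} [Fintype ι] [Fintype ι']
    (σ : ι ≃ ι') {b : ι' → ℤ} {lam : κ → ι → ℤ}
    (h : AddSubgroup.closure (Set.range lam) = dotProductKer (b ∘ σ)) :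
    AddSubgroup.closure (Set.range fun i => lam i ∘ σ.symm) = dotProductKer b := by
  let e := (LinearMap.funLeft ℤ ℤ σ.symm).toAddMonoidHom
  rw [show (Set.range fun i => lam i ∘ σ.symm) = e '' Set.range lam from Set.range_comp e lam,
    ← AddMonoidHom.map_closure, h]
  ext w
  simp only [AddSubgroup.mem_map, mem_dotProductKer]
  constructor
  · rintro ⟨u, hu, rfl⟩
    simpa [e, LinearMap.funLeft, comp_equiv_symm_dotProduct] using hu
  · intro hw
    refine ⟨w ∘ σ, by simpa [comp_equiv_symm_dotProduct] using hw, ?_⟩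
    ext
    simp [e, LinearMap.funLeft]

theorem kernel_of_dot_product_generators_general (k : ℕ) (b : Fin k → ℤ)
    (hb : b ≠ 0) (φ : (Fin k → ℤ) →+ ℤ) (hφ : ∀ u : Fin k → ℤ, φ u = ∑ i, u i * b i) :
    ∃ lam : Fin (k - 1) → (Fin k → ℤ),
      AddSubgroup.closure (Set.range lam) = φ.ker ∧
      ∀ i : Fin (k - 1), (∑ j, |lam i j|) ≤ 2 ^ (k - 1) * ∑ j, |b j| := by
  cases k with
  | zero => exact absurd (Subsingleton.elim b 0) hb
  | succ n =>
    have hker : φ.ker = dotProductKer b := AddSubgroup.ext fun u => by simp [hφ, dotProduct]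
    obtain ⟨σ, hσ⟩ := exists_perm_lastEntryMinAbs hb
    obtain ⟨lam, hspan, hnorm⟩ := exists_closure_range_eq_dotProductKer hσ
    refine ⟨fun i => lam i ∘ σ.symm, hker ▸ closure_range_comp_equiv_eq_dotProductKer σ hspan,
      fun i => ?_⟩
    calc l1Norm (lam i ∘ σ.symm) = l1Norm (lam i) := l1Norm_comp_equiv _ _
      _ ≤ 2 * l1Norm (b ∘ σ) := hnorm i
      _ = 2 * l1Norm b := by rw [l1Norm_comp_equiv]
      _ ≤ 2 ^ n * l1Norm b := by
          have := i.pos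
          gcongr
          · exact l1Norm_nonneg b
          · exact le_self_pow₀ (by norm_num) (by omega)

/-- for a nonzero `b ∈ ℤ^k` (`k ≥ 2`), the kernel of the dot
product map `φ_b : ℤ^k → ℤ` is generated by `k - 1` vectors of ℓ¹-norm at most
`2^(k-1) ‖b‖₁`. -/
theorem kernel_of_dot_product_generators (k : ℕ) (hk : 2 ≤ k) (b : Fin k → ℤ)
    (hb : b ≠ 0) (φ : (Fin k → ℤ) →+ ℤ) (hφ : ∀ u : Fin k → ℤ, φ u = ∑ i, u i * b i) :
    ∃ lam : Fin (k - 1) → (Fin k → ℤ),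
      AddSubgroup.closure (Set.range lam) = φ.ker ∧
      ∀ i : Fin (k - 1), (∑ j, |lam i j|) ≤ 2 ^ (k - 1) * ∑ j, |b j| :=
  kernel_of_dot_product_generators_general k b hb φ hφ
end

section
/- Let k > 1 and let b = (b₁, …, b_k) ∈ ℤ^k satisfy gcd(b₁, …, b_k) = 1. Then b belongs to some free basis of ℤ^k, and there exists a matrix T ∈ GL_k(ℤ) such that T(b) = (1, 0, …, 0) and every entry of T has absolute value at most 2^{k−1}‖b‖₁; consequently T maps the cube [−1,1]^k into the cube [−2^{k−1}k‖b‖₁, 2^{k−1}k‖b‖₁]^k. -/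
/-!
Induct on the dimension. Write `b = (b₀, g • w)` with `g` the gcd of the tail, so that `w` is
primitive, and let `S` be a unimodular matrix with `S w = e₀`. Choose `a` with `a ⬝ b = 1` and `y`
with `y ⬝ w = b₀`; the matrix with rows `a`, `(-g, y)` and `(0, Sᵢ)` for `i ≥ 1` sends `b` to `e₀`.
Its last rows span the lifted `w⊥`, and since `g` and `b₀` are coprime, adding `(-g, y)` spans
`b⊥`; together with `a` the rows span `ℤ^k`, so the matrix is unimodular. Bézout coefficients
for `c` can be chosen of size at most `|c| + ‖w‖₁` by reducing all but one of them modulo a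
nonzero entry of `w`, so each step at most doubles the entry bound.
-/

open Finset Matrix

theorem Finset.univ_gcd_vecCons {α : Type*} [CommMonoidWithZero α] [NormalizedGCDMonoid α]
    {n : ℕ} (x : α) (r : Fin n → α) : univ.gcd (vecCons x r) = GCDMonoid.gcd x (univ.gcd r) := by
  rw [Fin.univ_succ, cons_eq_insert, gcd_insert, map_eq_image, gcd_image]
  rfl

section Bezout

variable {ι : Type*} [Fintype ι]

theorem exists_dotProduct_eq_of_gcd_dvd_s19 (w : ι → ℤ) {c : ℤ} (hc : univ.gcd w ∣ c) :
    ∃ y : ι → ℤ, y ⬝ᵥ w = c := by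
  obtain ⟨f, hf⟩ := univ.gcd_eq_sum_mul w
  obtain ⟨d, rfl⟩ := hc
  refine ⟨d • f, ?_⟩
  simp only [dotProduct, hf, Finset.sum_mul, Pi.smul_apply, smul_eq_mul]
  exact sum_congr rfl fun _ _ => by ring

variable [DecidableEq ι]

theorem exists_dotProduct_eq_and_abs_lt (y w : ι → ℤ) {i : ι} (hi : w i ≠ 0) :
    ∃ y' : ι → ℤ, y' ⬝ᵥ w = y ⬝ᵥ w ∧ ∀ j ≠ i, |y' j| < |w i| := by
  refine ⟨fun j => y j % w i + if j = i then ∑ l, y l / w i * w l else 0, ?_, fun j hj => ?_⟩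
  · calc _ = ∑ j, y j % w i * w j + (∑ l, y l / w i * w l) * w i := by
          simp [dotProduct, add_mul, sum_add_distrib, ite_mul]
      _ = ∑ j, (y j % w i + w i * (y j / w i)) * w j := by
          rw [sum_mul, ← sum_add_distrib]
          exact sum_congr rfl fun _ _ => by ring
      _ = y ⬝ᵥ w := by simp only [Int.emod_add_mul_ediv]; rfl
  · simpa [hj, abs_of_nonneg (Int.emod_nonneg _ hi)] using Int.emod_lt_abs (y j) hi

theorem abs_le_of_forall_ne_abs_le {y w : ι → ℤ} {i : ι} (hi : w i ≠ 0)
    (hy : ∀ j ≠ i, |y j| ≤ |w i|) : |y i| ≤ |y ⬝ᵥ w| + ∑ l, |w l| := by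
  have hwi : 0 < |w i| := abs_pos.mpr hi
  have hrest : |∑ j ∈ univ.erase i, y j * w j| ≤ |w i| * ∑ j ∈ univ.erase i, |w j| := by
    rw [mul_sum]
    refine (abs_sum_le_sum_abs _ _).trans (sum_le_sum fun j hj => ?_)
    rw [abs_mul]
    exact mul_le_mul_of_nonneg_right (hy j (ne_of_mem_erase hj)) (abs_nonneg _)
  have hsplit : y i * w i = y ⬝ᵥ w - ∑ j ∈ univ.erase i, y j * w j := by
    rw [dotProduct, ← add_sum_erase _ _ (mem_univ i)]
    ring
  have hle : |w i| * |y i| ≤ |w i| * (|y ⬝ᵥ w| + ∑ j ∈ univ.erase i, |w j|) := by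
    calc |w i| * |y i| = |y ⬝ᵥ w - ∑ j ∈ univ.erase i, y j * w j| := by
          rw [← hsplit, abs_mul, mul_comm]
      _ ≤ |y ⬝ᵥ w| + |w i| * ∑ j ∈ univ.erase i, |w j| := (abs_sub _ _).trans (by gcongr)
      _ ≤ |w i| * (|y ⬝ᵥ w| + ∑ j ∈ univ.erase i, |w j|) := by
          nlinarith [abs_nonneg (y ⬝ᵥ w), Int.one_le_abs hi]
  calc |y i| ≤ |y ⬝ᵥ w| + ∑ j ∈ univ.erase i, |w j| := le_of_mul_le_mul_left hle hwi
    _ ≤ |y ⬝ᵥ w| + ∑ l, |w l| := by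
        gcongr
        exact erase_subset i univ

theorem exists_dotProduct_eq_and_abs_le (w : ι → ℤ) {i : ι} (hi : w i ≠ 0) {c : ℤ}
    (hc : univ.gcd w ∣ c) : ∃ y : ι → ℤ, y ⬝ᵥ w = c ∧ ∀ j, |y j| ≤ |c| + ∑ l, |w l| := by
  obtain ⟨y₀, hy₀⟩ := exists_dotProduct_eq_of_gcd_dvd_s19 w hc
  obtain ⟨y, hy, hlt⟩ := exists_dotProduct_eq_and_abs_lt y₀ w hi
  have hwi : |w i| ≤ ∑ l, |w l| := single_le_sum (fun l _ => abs_nonneg (w l)) (mem_univ i)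
  refine ⟨y, hy.trans hy₀, fun j => ?_⟩
  by_cases hj : j = i
  · subst hj
    simpa [hy, hy₀] using abs_le_of_forall_ne_abs_le hi fun l hl => (hlt l hl).le
  · linarith [hlt j hj, abs_nonneg c]

end Bezout

namespace Matrix

section Unimodular

variable {R ι : Type*} [CommRing R] [Fintype ι] [DecidableEq ι]

theorem isUnit_of_mulVec_eq_single {T : Matrix ι ι R} {v : ι → R} {i : ι}
    (hTv : T *ᵥ v = Pi.single i 1)
    (hspan : ∀ x, x ⬝ᵥ v = 0 → x ∈ Submodule.span R (Set.range T.row)) : IsUnit T := by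
  rw [← vecMul_surjective_iff_isUnit, ← coe_vecMulLinear, ← LinearMap.range_eq_top,
    range_vecMulLinear, Submodule.eq_top_iff']
  intro x
  have hrow : T i ⬝ᵥ v = 1 := by simpa [mulVec] using congrFun hTv i
  rw [← add_sub_cancel ((x ⬝ᵥ v) • T i) x]
  refine add_mem (Submodule.smul_mem _ _ (Submodule.subset_span ⟨i, rfl⟩)) (hspan _ ?_)
  simp [sub_dotProduct, smul_dotProduct, hrow]

theorem mem_span_row_image_compl_of_dotProduct_eq_zero {S : Matrix ι ι R} (hS : IsUnit S)
    {w z : ι → R} {i : ι} (hSw : S *ᵥ w = Pi.single i 1) (hz : z ⬝ᵥ w = 0) :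
    z ∈ Submodule.span R (S.row '' {i}ᶜ) := by
  have hdet : IsUnit S.det := (isUnit_iff_isUnit_det S).mp hS
  set c := z ᵥ* S⁻¹
  have hci : c i = 0 := by
    rw [← dotProduct_single_one c i, ← hSw, ← dotProduct_mulVec, mulVec_mulVec,
      nonsing_inv_mul _ hdet, one_mulVec, hz]
  have hzc : z = c ᵥ* S := by rw [vecMul_vecMul, nonsing_inv_mul _ hdet, vecMul_one]
  rw [hzc, vecMul_eq_sum]
  refine Submodule.sum_mem _ fun j _ => ?_
  by_cases hj : j = i
  · simp [hj, hci]
  · exact Submodule.smul_mem _ _ (Submodule.subset_span ⟨j, hj, rfl⟩)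

theorem exists_basis_apply_eq_of_mulVec_eq_single {T : Matrix ι ι R} (hT : IsUnit T)
    {b : ι → R} {i : ι} (hTb : T *ᵥ b = Pi.single i 1) :
    ∃ (v : Module.Basis ι R (ι → R)) (j : ι), v j = b := by
  refine ⟨(Pi.basisFun R ι).map (T.toLinearEquiv' hT.invertible).symm, i, ?_⟩
  rw [Module.Basis.map_apply, Pi.basisFun_apply, LinearEquiv.symm_apply_eq]
  exact hTb.symm

end Unimodular

section Reducer

variable {R : Type*} [CommRing R] {n : ℕ}

def reducerSucc (a : Fin (n + 2) → R) (g : R) (y : Fin (n + 1) → R)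
    (S : Matrix (Fin (n + 1)) (Fin (n + 1)) R) : Matrix (Fin (n + 2)) (Fin (n + 2)) R :=
  of (vecCons a (vecCons (vecCons (-g) y) fun i => vecCons 0 (S i.succ)))

variable {a : Fin (n + 2) → R} {g v₀ : R} {y w : Fin (n + 1) → R}
  {S : Matrix (Fin (n + 1)) (Fin (n + 1)) R}

theorem reducerSucc_mulVec (ha : a ⬝ᵥ vecCons v₀ (g • w) = 1) (hy : y ⬝ᵥ w = v₀)
    (hSw : S *ᵥ w = Pi.single 0 1) :
    reducerSucc a g y S *ᵥ vecCons v₀ (g • w) = Pi.single 0 1 := by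
  ext i
  refine Fin.cases ?_ (Fin.cases ?_ fun i => ?_) i
  · simpa [reducerSucc, mulVec] using ha
  · simp [reducerSucc, mulVec, dotProduct_smul, hy]
  · have hSi : S i.succ ⬝ᵥ w = 0 := by simpa [mulVec] using congrFun hSw i.succ
    simp [reducerSucc, mulVec, dotProduct_smul, hSi]

theorem isUnit_reducerSucc [IsDomain R] (hg : g ≠ 0) (hcop : IsCoprime g v₀)
    (ha : a ⬝ᵥ vecCons v₀ (g • w) = 1) (hy : y ⬝ᵥ w = v₀) (hS : IsUnit S)
    (hSw : S *ᵥ w = Pi.single 0 1) : IsUnit (reducerSucc a g y S) := by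
  refine isUnit_of_mulVec_eq_single (reducerSucc_mulVec ha hy hSw) fun x hx => ?_
  obtain ⟨x₀, x', rfl⟩ : ∃ x₀ x', x = vecCons x₀ x' :=
    ⟨x 0, Fin.tail x, (Fin.cons_self_tail x).symm⟩
  rw [cons_dotProduct_cons, dotProduct_smul, smul_eq_mul] at hx
  obtain ⟨u, rfl⟩ : g ∣ x₀ := hcop.dvd_of_dvd_mul_right ⟨-(x' ⬝ᵥ w), by linear_combination hx⟩
  have hz : (x' + u • y) ⬝ᵥ w = 0 := by
    refine mul_left_cancel₀ hg ?_
    rw [add_dotProduct, smul_dotProduct, hy, smul_eq_mul]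
    linear_combination hx
  have hsplit : vecCons (g * u) x' = (-u) • vecCons (-g) y + vecCons 0 (x' + u • y) := by
    ext i
    refine Fin.cases ?_ (fun i => ?_) i <;> simp [mul_comm]
  rw [hsplit]
  refine add_mem (Submodule.smul_mem _ _ (Submodule.subset_span ⟨1, rfl⟩)) ?_
  refine Submodule.span_mono ?_ (Submodule.apply_mem_span_image_of_mem_span
    (LinearMap.vecCons 0 LinearMap.id) (mem_span_row_image_compl_of_dotProduct_eq_zero hS hSw hz))
  rintro _ ⟨_, ⟨j, hj, rfl⟩, rfl⟩
  obtain ⟨j, rfl⟩ := Fin.exists_succ_eq.mpr hj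
  exact ⟨j.succ.succ, rfl⟩

theorem abs_reducerSucc_le [LinearOrder R] [IsOrderedRing R] {C : R} (ha : ∀ j, |a j| ≤ C)
    (hg : |g| ≤ C) (hy : ∀ j, |y j| ≤ C) (hS : ∀ i j, |S i j| ≤ C) (i j : Fin (n + 2)) :
    |reducerSucc a g y S i j| ≤ C := by
  have hC : 0 ≤ C := (abs_nonneg g).trans hg
  refine Fin.cases ?_ (Fin.cases ?_ fun i => ?_) i
  · simpa [reducerSucc] using ha j
  · refine Fin.cases ?_ (fun j => ?_) j <;> simp [reducerSucc, hg, hy]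
  · refine Fin.cases ?_ (fun j => ?_) j <;> simp [reducerSucc, hC, hS]

end Reducer

end Matrix

theorem exists_isUnit_mulVec_vecCons_zero_eq_single {n : ℕ} {v₀ : ℤ}
    (hv : univ.gcd (vecCons v₀ (0 : Fin n → ℤ)) = 1) :
    ∃ T : Matrix (Fin (n + 1)) (Fin (n + 1)) ℤ, IsUnit T ∧ T *ᵥ vecCons v₀ 0 = Pi.single 0 1 ∧
      ∀ i j, |T i j| ≤ 2 ^ n * ∑ l, |vecCons v₀ (0 : Fin n → ℤ) l| := by
  have habs : |v₀| = 1 := by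
    have h0 : univ.gcd (0 : Fin n → ℤ) = 0 := gcd_eq_zero_iff.mpr fun _ _ => rfl
    rw [univ_gcd_vecCons, h0, gcd_zero_right] at hv
    rw [Int.abs_eq_normalize, hv]
  have hsq : v₀ * v₀ = 1 := by rw [← abs_mul_abs_self, habs, one_mul]
  refine ⟨v₀ • 1, IsUnit.of_mul_eq_one (v₀ • 1) (by rw [smul_mul_smul, one_mul, hsq, one_smul]),
    ?_, fun i j => ?_⟩
  · rw [smul_mulVec, one_mulVec]
    ext i
    refine Fin.cases ?_ (fun i => ?_) i <;> simp [hsq]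
  · have hle : |(v₀ • 1 : Matrix (Fin (n + 1)) (Fin (n + 1)) ℤ) i j| ≤ 1 := by
      rw [Matrix.smul_apply, one_apply]
      split_ifs <;> simp [habs]
    simpa [Fin.sum_univ_succ, habs] using hle.trans (one_le_pow₀ one_le_two)

theorem exists_isUnit_mulVec_vecCons_smul_eq_single {n : ℕ} {v₀ g : ℤ} {w : Fin (n + 1) → ℤ} (hg : 0 < g)
    (hv : univ.gcd (vecCons v₀ (g • w)) = 1) (hw : univ.gcd w = 1)
    {S : Matrix (Fin (n + 1)) (Fin (n + 1)) ℤ} (hS : IsUnit S) (hSw : S *ᵥ w = Pi.single 0 1)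
    (hSle : ∀ i j, |S i j| ≤ 2 ^ n * ∑ l, |w l|) :
    ∃ T : Matrix (Fin (n + 2)) (Fin (n + 2)) ℤ, IsUnit T ∧
      T *ᵥ vecCons v₀ (g • w) = Pi.single 0 1 ∧
      ∀ i j, |T i j| ≤ 2 ^ (n + 1) * ∑ l, |vecCons v₀ (g • w) l| := by
  have hcop : IsCoprime g v₀ := by
    rw [univ_gcd_vecCons, show g • w = fun i => g * w i from rfl, Finset.gcd_mul_left, hw, mul_one,
      Int.normalize_of_nonneg hg.le] at hv
    exact ((gcd_isUnit_iff _ _).mp (hv ▸ isUnit_one)).symm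
  obtain ⟨i₀, hi₀⟩ : ∃ i, w i ≠ 0 := by
    by_contra! h
    simp [gcd_eq_zero_iff.mpr fun i _ => h i] at hw
  obtain ⟨a, ha, hale⟩ := exists_dotProduct_eq_and_abs_le (vecCons v₀ (g • w)) (i := i₀.succ)
    (by simp [hg.ne', hi₀]) (c := 1) (by rw [hv])
  obtain ⟨y, hy, hyle⟩ := exists_dotProduct_eq_and_abs_le w hi₀ (hw ▸ one_dvd v₀)
  set N := ∑ l, |vecCons v₀ (g • w) l|
  have hN : N = |v₀| + g * ∑ l, |w l| := by
    simp [N, Fin.sum_univ_succ (n := n + 1), abs_mul, abs_of_pos hg, ← mul_sum]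
  have hwN : |v₀| + ∑ l, |w l| ≤ N :=
    hN ▸ add_le_add_right (le_mul_of_one_le_left (sum_nonneg fun l _ => abs_nonneg (w l)) hg) _
  have hgN : g ≤ N := by
    have : 1 ≤ ∑ l, |w l| := (Int.one_le_abs hi₀).trans
      (single_le_sum (fun l _ => abs_nonneg (w l)) (mem_univ i₀))
    nlinarith [abs_nonneg v₀]
  have hNM : N ≤ 2 ^ n * N := le_mul_of_one_le_left (by linarith) (one_le_pow₀ one_le_two)
  have hSM : 2 ^ n * ∑ l, |w l| ≤ 2 ^ n * N := by
    gcongr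
    linarith [abs_nonneg v₀]
  rw [show 2 ^ (n + 1) * N = 2 * (2 ^ n * N) by ring]
  refine ⟨reducerSucc a g y S, isUnit_reducerSucc hg.ne' hcop ha hy hS hSw,
    reducerSucc_mulVec ha hy hSw, abs_reducerSucc_le (fun j => ?_) ?_ (fun j => ?_) fun i j => ?_⟩
  · linarith [hale j, abs_one (α := ℤ)]
  · linarith [abs_of_pos hg]
  · linarith [hyle j]
  · linarith [hSle i j]

theorem exists_isUnit_mulVec_eq_single_zero (n : ℕ) (v : Fin (n + 1) → ℤ)
    (hv : univ.gcd v = 1) : ∃ T : Matrix (Fin (n + 1)) (Fin (n + 1)) ℤ,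
      IsUnit T ∧ T *ᵥ v = Pi.single 0 1 ∧ ∀ i j, |T i j| ≤ 2 ^ n * ∑ l, |v l| := by
  induction n with
  | zero =>
    obtain ⟨v₀, r, rfl⟩ : ∃ v₀ r, v = vecCons v₀ r := ⟨v 0, Fin.tail v, (Fin.cons_self_tail v).symm⟩
    obtain rfl := Subsingleton.elim r 0
    exact exists_isUnit_mulVec_vecCons_zero_eq_single hv
  | succ n ih =>
    obtain ⟨v₀, r, rfl⟩ : ∃ v₀ r, v = vecCons v₀ r := ⟨v 0, Fin.tail v, (Fin.cons_self_tail v).symm⟩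
    obtain ⟨w, hrw, hw⟩ := extract_gcd r univ_nonempty
    generalize hg : univ.gcd r = g at hrw
    obtain rfl : r = g • w := funext fun i => hrw i (mem_univ i)
    have hg0 : 0 ≤ g := by
      rw [← hg, ← Finset.normalize_gcd, ← Int.abs_eq_normalize]
      exact abs_nonneg _
    rcases hg0.lt_or_eq with hpos | rfl
    · obtain ⟨S, hS, hSw, hSle⟩ := ih w hw
      exact exists_isUnit_mulVec_vecCons_smul_eq_single hpos hv hw hS hSw hSle
    · rw [zero_smul] at hv ⊢
      exact exists_isUnit_mulVec_vecCons_zero_eq_single hv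

theorem Matrix.abs_mulVec_le {R m n : Type*} [CommRing R] [LinearOrder R] [IsOrderedRing R]
    [Fintype n] {A : Matrix m n R} {C : R} (hA : ∀ i j, |A i j| ≤ C) {v : n → R}
    (hv : ∀ j, |v j| ≤ 1) (i : m) : |(A *ᵥ v) i| ≤ Fintype.card n * C := by
  calc |(A *ᵥ v) i| ≤ ∑ j, |A i j * v j| := abs_sum_le_sum_abs _ _
    _ ≤ ∑ _j : n, C := sum_le_sum fun j _ => by
        rw [abs_mul]
        exact (mul_le_of_le_one_right (abs_nonneg _) (hv j)).trans (hA i j)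
    _ = Fintype.card n * C := by rw [sum_const, card_univ, nsmul_eq_mul]

theorem coprime_vector_in_basis_and_GL_general (k : ℕ) (b : Fin k → ℤ)
    (hb : Finset.univ.gcd b = 1) :
    (∃ (v : Module.Basis (Fin k) ℤ (Fin k → ℤ)) (i : Fin k), v i = b) ∧
    ∃ T : Matrix (Fin k) (Fin k) ℤ, IsUnit T.det ∧
      T.mulVec b = (fun j : Fin k => if (j : ℕ) = 0 then 1 else 0) ∧
      (∀ i j : Fin k, |T i j| ≤ 2 ^ (k - 1) * ∑ l, |b l|) ∧
      (∀ v : Fin k → ℝ, (∀ i, |v i| ≤ 1) →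
        ∀ i, |((T.map (Int.cast : ℤ → ℝ)).mulVec v) i| ≤
          2 ^ (k - 1) * (k : ℝ) * ∑ l, (|b l| : ℝ)) := by
  obtain ⟨n, rfl⟩ : ∃ n, k = n + 1 := Nat.exists_eq_succ_of_ne_zero (by rintro rfl; simp at hb)
  obtain ⟨T, hT, hTb, hTle⟩ := exists_isUnit_mulVec_eq_single_zero n b hb
  have he₀ : (fun j : Fin (n + 1) => if (j : ℕ) = 0 then (1 : ℤ) else 0) = Pi.single 0 1 := by
    ext j
    simp only [Pi.single_apply, Fin.ext_iff, Fin.val_zero]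
  have hTle' : ∀ i j, |T.map (Int.cast : ℤ → ℝ) i j| ≤ 2 ^ n * ∑ l, (|b l| : ℝ) := fun i j => by
    rw [map_apply]
    exact_mod_cast hTle i j
  refine ⟨exists_basis_apply_eq_of_mulVec_eq_single hT hTb, T, (isUnit_iff_isUnit_det T).mp hT,
    he₀ ▸ hTb, hTle, fun v hv i => ?_⟩
  calc _ ≤ Fintype.card (Fin (n + 1)) * (2 ^ n * ∑ l, (|b l| : ℝ)) := abs_mulVec_le hTle' hv i
    _ = _ := by push_cast [Fintype.card_fin]; ring

/-- a vector `b ∈ ℤ^k` (`k > 1`) with coprime entries belongs to a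
free basis of `ℤ^k`, and there is `T ∈ GL_k(ℤ)` with `T b = e₁`, all entries of
`T` bounded by `2^(k-1) ‖b‖₁`, and consequently `T` maps the cube `[-1,1]^k`
into the cube `[-2^(k-1) k ‖b‖₁, 2^(k-1) k ‖b‖₁]^k`. -/
theorem coprime_vector_in_basis_and_GL (k : ℕ) (hk : 1 < k) (b : Fin k → ℤ)
    (hb : Finset.univ.gcd b = 1) :
    (∃ (v : Module.Basis (Fin k) ℤ (Fin k → ℤ)) (i : Fin k), v i = b) ∧
    ∃ T : Matrix (Fin k) (Fin k) ℤ, IsUnit T.det ∧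
      T.mulVec b = (fun j : Fin k => if (j : ℕ) = 0 then 1 else 0) ∧
      (∀ i j : Fin k, |T i j| ≤ 2 ^ (k - 1) * ∑ l, |b l|) ∧
      (∀ v : Fin k → ℝ, (∀ i, |v i| ≤ 1) →
        ∀ i, |((T.map (Int.cast : ℤ → ℝ)).mulVec v) i| ≤
          2 ^ (k - 1) * (k : ℝ) * ∑ l, (|b l| : ℝ)) :=
  coprime_vector_in_basis_and_GL_general k b hb
end
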